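/- arXiv:math-ph/0609033 — 3 statements merged into one kernel-verified Lean document; each statement's English description precedes it below -/
import Mathlib

section
/- Let U ⊆ ℝⁿ be open, let F : U → ℝ be smooth, and let η = (η_{αβ}) be a symmetric invertible real n×n matrix. Suppose F satisfies the associativity equations with metric η on U. Define F̃ on ℝ × U × ℝ (with coordinates t⁰, t¹,…,tⁿ, t^{n+1}) by F̃(t⁰,t¹,…,tⁿ,t^{n+1}) = (1/2)(∑_{α,β=1}^n η_{αβ} t^α t^β t⁰ + (t⁰)² t^{n+1}) + F(t¹,…,tⁿ), and let η̃ be the (n+2)×(n+2) symmetric matrix with block form η̃ = [[0,0,1],[0,η,0],[1,0,0]] (indices 0,…,n+1, with η̃_{0,n+1} = η̃_{n+1,0} = 1, η̃_{αβ} = η_{αβ} for 1 ≤ α,β ≤ n, all other entries zero). Then F̃ satisfies the associativity equations with the metric η̃ on ℝ × U × ℝ. -/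
open scoped BigOperators

noncomputable section

/-- The embedding of the index set `{1,…,n}` into `{0,1,…,n+1}` (as the middle indices). -/
def emb (n : ℕ) (a : Fin n) : Fin (n + 2) := a.castSucc.succ

/-- The standard basis vector `e_i` of `ℝⁿ`. -/
def stdBasis (n : ℕ) (i : Fin n) : Fin n → ℝ := Pi.single i 1

/-- Third partial derivative `∂³F/∂t^a∂t^b∂t^g` of `F` at `t` (within the set `U`). -/
def thirdDeriv (n : ℕ) (F : (Fin n → ℝ) → ℝ) (U : Set (Fin n → ℝ))
    (t : Fin n → ℝ) (a b g : Fin n) : ℝ :=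
  iteratedFDerivWithin ℝ 3 F U t ![stdBasis n a, stdBasis n b, stdBasis n g]

/-- `F` satisfies the associativity equations on `U` with (inverse) metric `ηinv = (η^{αβ})`:
`∑_{λ,μ} ∂³F/∂t^α∂t^β∂t^λ η^{λμ} ∂³F/∂t^γ∂t^δ∂t^μ
  = ∑_{λ,μ} ∂³F/∂t^γ∂t^β∂t^λ η^{λμ} ∂³F/∂t^α∂t^δ∂t^μ`. -/
def AssocEqns (n : ℕ) (F : (Fin n → ℝ) → ℝ) (U : Set (Fin n → ℝ))
    (ηinv : Matrix (Fin n) (Fin n) ℝ) : Prop :=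
  ∀ t ∈ U, ∀ α β γ δ : Fin n,
    ∑ l, ∑ m, thirdDeriv n F U t α β l * ηinv l m * thirdDeriv n F U t γ δ m
      = ∑ l, ∑ m, thirdDeriv n F U t γ β l * ηinv l m * thirdDeriv n F U t α δ m

/-- `F̃(t⁰,t¹,…,tⁿ,t^{n+1}) = ½(∑ η_{αβ} t^α t^β t⁰ + (t⁰)² t^{n+1}) + F(t¹,…,tⁿ)`. -/
def Ftilde (n : ℕ) (η : Matrix (Fin n) (Fin n) ℝ)
    (F : (Fin n → ℝ) → ℝ) (t : Fin (n + 2) → ℝ) : ℝ :=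
  (1 / 2) * ((∑ a, ∑ b, η a b * t (emb n a) * t (emb n b)) * t 0
      + (t 0) ^ 2 * t (Fin.last (n + 1)))
    + F (fun a => t (emb n a))

/-- The block matrix `η̃ = [[0,0,1],[0,η,0],[1,0,0]]` on indices `0,…,n+1`. -/
def etilde (n : ℕ) (η : Matrix (Fin n) (Fin n) ℝ) :
    Matrix (Fin (n + 2)) (Fin (n + 2)) ℝ := fun i j =>
  (if i = 0 ∧ j = Fin.last (n + 1) then 1 else 0)
    + (if i = Fin.last (n + 1) ∧ j = 0 then 1 else 0)
    + ∑ a, ∑ b, if i = emb n a ∧ j = emb n b then η a b else 0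

/-- The domain `ℝ × U × ℝ ⊆ ℝ^{n+2}`. -/
def Utilde (n : ℕ) (U : Set (Fin n → ℝ)) : Set (Fin (n + 2) → ℝ) :=
  (fun t : Fin (n + 2) → ℝ => fun a : Fin n => t (emb n a)) ⁻¹' U

/-! ### Auxiliary lemmas -/

section Aux

lemma emb_ne_zero (n : ℕ) (a : Fin n) : emb n a ≠ 0 := Fin.succ_ne_zero _
lemma emb_ne_last (n : ℕ) (a : Fin n) : emb n a ≠ Fin.last (n+1) := by
  simp [emb, ← Fin.succ_last, Fin.succ_inj, Fin.ext_iff]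
  omega
lemma emb_inj (n : ℕ) : Function.Injective (emb n) := fun a b h => by
  simpa [emb, Fin.succ_inj, Fin.castSucc_inj] using h
lemma zero_ne_last (n : ℕ) : (0 : Fin (n+2)) ≠ Fin.last (n+1) := by
  simp [Fin.ext_iff]
lemma sum_split (n : ℕ) (f : Fin (n+2) → ℝ) :
    ∑ i, f i = f 0 + (∑ a, f (emb n a)) + f (Fin.last (n+1)) := by
  rw [Fin.sum_univ_succ, Fin.sum_univ_castSucc]
  simp [emb, Fin.succ_last, add_assoc]
lemma tri (n : ℕ) (i : Fin (n+2)) :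
    i = 0 ∨ (∃ a, i = emb n a) ∨ i = Fin.last (n+1) := by
  rcases Fin.eq_zero_or_eq_succ i with h | ⟨j, rfl⟩
  · exact Or.inl h
  rcases Fin.eq_castSucc_or_eq_last j with ⟨a, rfl⟩ | rfl
  · exact Or.inr (Or.inl ⟨a, rfl⟩)
  · exact Or.inr (Or.inr (by simp [Fin.succ_last]))

variable {n : ℕ} {η : Matrix (Fin n) (Fin n) ℝ}

lemma zero_ne_emb (a : Fin n) : (0 : Fin (n+2)) ≠ emb n a := (emb_ne_zero n a).symm
lemma last_ne_emb (a : Fin n) : Fin.last (n+1) ≠ emb n a := (emb_ne_last n a).symm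
lemma last_ne_zero' : Fin.last (n+1) ≠ (0 : Fin (n+2)) := (zero_ne_last n).symm

lemma et_mm (a b : Fin n) : etilde n η (emb n a) (emb n b) = η a b := by
  simp [etilde, emb_ne_zero, emb_ne_last, (emb_inj n).eq_iff, ite_and, Finset.sum_ite_eq]
lemma et_00 : etilde n η 0 0 = 0 := by
  simp [etilde, zero_ne_last n, zero_ne_emb]
lemma et_0L : etilde n η 0 (Fin.last (n+1)) = 1 := by
  simp [etilde, zero_ne_emb, last_ne_zero']
lemma et_L0 : etilde n η (Fin.last (n+1)) 0 = 1 := by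
  simp [etilde, last_ne_emb, last_ne_zero']
lemma et_LL : etilde n η (Fin.last (n+1)) (Fin.last (n+1)) = 0 := by
  simp [etilde, last_ne_emb, last_ne_zero']
lemma et_0m (b : Fin n) : etilde n η 0 (emb n b) = 0 := by
  simp [etilde, zero_ne_emb, emb_ne_last, emb_ne_zero]
lemma et_m0 (a : Fin n) : etilde n η (emb n a) 0 = 0 := by
  simp [etilde, emb_ne_zero, emb_ne_last, zero_ne_emb]
lemma et_mL (a : Fin n) : etilde n η (emb n a) (Fin.last (n+1)) = 0 := by
  simp [etilde, emb_ne_zero, emb_ne_last, last_ne_emb]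
lemma et_Lm (b : Fin n) : etilde n η (Fin.last (n+1)) (emb n b) = 0 := by
  simp [etilde, last_ne_emb, last_ne_zero', emb_ne_zero]

lemma etilde_inv (hdet : IsUnit η.det) : (etilde n η)⁻¹ = etilde n η⁻¹ := by
  refine (Matrix.inv_eq_right_inv ?_)
  ext i j
  rw [Matrix.mul_apply, sum_split]
  have hmul : ∀ a b : Fin n, ∑ c, η a c * η⁻¹ c b = if a = b then 1 else 0 := by
    intro a b
    have : ∑ c, η a c * η⁻¹ c b = (η * η⁻¹) a b := (Matrix.mul_apply).symm
    rw [this, Matrix.mul_nonsing_inv _ hdet, Matrix.one_apply]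
  rcases tri n i with rfl | ⟨a, rfl⟩ | rfl <;> rcases tri n j with rfl | ⟨b, rfl⟩ | rfl <;>
    simp [et_mm, et_00, et_0L, et_L0, et_LL, et_0m, et_m0, et_mL, et_Lm, hmul,
      Matrix.one_apply, zero_ne_emb, last_ne_emb, zero_ne_last n, last_ne_zero',
      (emb_inj n).eq_iff, emb_ne_zero, emb_ne_last]

end Aux

/-! ### Nested directional derivatives -/

/-- The third directional derivative of `f` at `x` along `u, v, w`, as nested `fderiv`s. -/
def N3 {m : ℕ} (f : (Fin m → ℝ) → ℝ) (x u v w : Fin m → ℝ) : ℝ :=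
  fderiv ℝ (fun y => fderiv ℝ (fun z => fderiv ℝ f z w) y v) x u

section Nested

variable {m : ℕ} {f : (Fin m → ℝ) → ℝ} {U : Set (Fin m → ℝ)}

lemma D3_eq (hU : IsOpen U) (hf : ContDiffOn ℝ (⊤ : ℕ∞) f U) {t} (ht : t ∈ U) (u v w : Fin m → ℝ) :
    iteratedFDerivWithin ℝ 3 f U t ![u, v, w] = N3 f t u v w := by
  have hud : UniqueDiffOn ℝ U := hU.uniqueDiffOn
  have h1 : Fin.init ![u, v, w] = ![u, v] := by
    funext i; fin_cases i <;> rfl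
  have hc1 : ContDiffOn ℝ 2 (fun y => fderivWithin ℝ f U y) U :=
    hf.fderivWithin hud (WithTop.coe_le_coe.2 le_top)
  have step1 : iteratedFDerivWithin ℝ 3 f U t ![u, v, w]
      = iteratedFDerivWithin ℝ 2 (fun y => fderivWithin ℝ f U y w) U t ![u, v] := by
    show iteratedFDerivWithin ℝ (2+1) f U t ![u, v, w] = _
    rw [iteratedFDerivWithin_succ_apply_right hud ht, h1,
      iteratedFDerivWithin_clm_apply_const_apply (i := 2) hud hc1 (by norm_num) ht]
    rfl
  set G : (Fin m → ℝ) → ℝ := fun y => fderivWithin ℝ f U y w with hG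
  have hcG : ContDiffOn ℝ 2 G U := hc1.clm_apply contDiffOn_const
  have hc2 : ContDiffOn ℝ 1 (fun y => fderivWithin ℝ G U y) U :=
    hcG.fderivWithin hud (by norm_num)
  have h2 : Fin.init ![u, v] = ![u] := by
    funext i; fin_cases i <;> rfl
  have step2 : iteratedFDerivWithin ℝ 2 G U t ![u, v]
      = fderivWithin ℝ (fun y => fderivWithin ℝ G U y v) U t u := by
    show iteratedFDerivWithin ℝ (1+1) G U t ![u, v] = _
    rw [iteratedFDerivWithin_succ_apply_right hud ht, h2,
      ← iteratedFDerivWithin_clm_apply_const_apply (i := 1) hud hc2 (by norm_num) ht,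
      iteratedFDerivWithin_one_apply (hud t ht)]
    rfl
  rw [step1, step2]
  have e1 : Set.EqOn G (fun z => fderiv ℝ f z w) U := fun z hz => by
    simp only [hG, fderivWithin_of_isOpen hU hz]
  have e2 : Set.EqOn (fun y => fderivWithin ℝ G U y v)
      (fun y => fderiv ℝ (fun z => fderiv ℝ f z w) y v) U := fun y hy => by
    simp only
    rw [fderivWithin_congr e1 (e1 hy), fderivWithin_of_isOpen hU hy]
  rw [fderivWithin_congr e2 (e2 ht), fderivWithin_of_isOpen hU ht]
  rfl

lemma N3_zero₁ (x v w : Fin m → ℝ) : N3 f x 0 v w = 0 := by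
  simp [N3]

lemma N3_zero₃ (x u v : Fin m → ℝ) : N3 f x u v 0 = 0 := by
  have h : (fun z => fderiv ℝ f z 0) = fun _ => (0:ℝ) := by
    funext z; simp
  simp [N3, h]

lemma N3_zero₂ (x u w : Fin m → ℝ) : N3 f x u 0 w = 0 := by
  have h : (fun y => fderiv ℝ (fun z => fderiv ℝ f z w) y 0) = fun _ => (0:ℝ) := by
    funext y; simp
  simp [N3, h]

lemma fderiv_apply_const {g : (Fin m → ℝ) → (Fin m → ℝ) →L[ℝ] ℝ} {y : Fin m → ℝ}
    (hd : DifferentiableAt ℝ g y) (v w : Fin m → ℝ) :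
    fderiv ℝ (fun z => g z w) y v = fderiv ℝ g y v w := by
  rw [fderiv_clm_apply hd (differentiableAt_const w)]
  simp

lemma N3_symm23 (hU : IsOpen U) (hf : ContDiffOn ℝ (⊤ : ℕ∞) f U) {t} (ht : t ∈ U)
    (u v w : Fin m → ℝ) : N3 f t u v w = N3 f t u w v := by
  have key : Set.EqOn (fun y => fderiv ℝ (fun z => fderiv ℝ f z w) y v)
      (fun y => fderiv ℝ (fun z => fderiv ℝ f z v) y w) U := by
    intro y hy
    have hy' : ContDiffAt ℝ (⊤ : ℕ∞) f y := hf.contDiffAt (hU.mem_nhds hy)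
    have hd : DifferentiableAt ℝ (fderiv ℝ f) y :=
      (hy'.fderiv_right (m := 1) (WithTop.coe_le_coe.2 le_top)).differentiableAt one_ne_zero
    simp only [fderiv_apply_const hd]
    exact (hy'.isSymmSndFDerivAt (by rw [minSmoothness_of_isRCLikeNormedField]; exact WithTop.coe_le_coe.2 le_top)).eq v w
  unfold N3
  rw [Filter.EventuallyEq.fderiv_eq (Filter.eventuallyEq_of_mem (hU.mem_nhds ht) key)]

lemma N3_symm12 (hU : IsOpen U) (hf : ContDiffOn ℝ (⊤ : ℕ∞) f U) {t} (ht : t ∈ U)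
    (u v w : Fin m → ℝ) : N3 f t u v w = N3 f t v u w := by
  have ht' : ContDiffAt ℝ (⊤ : ℕ∞) f t := hf.contDiffAt (hU.mem_nhds ht)
  have hg : ContDiffAt ℝ 2 (fun z => fderiv ℝ f z w) t :=
    (ht'.fderiv_right (m := 2) (WithTop.coe_le_coe.2 le_top)).clm_apply contDiffAt_const
  have hd : DifferentiableAt ℝ (fderiv ℝ (fun z => fderiv ℝ f z w)) t :=
    (hg.fderiv_right (m := 1) (by norm_num)).differentiableAt one_ne_zero
  unfold N3
  rw [fderiv_apply_const hd, fderiv_apply_const hd,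
    (hg.isSymmSndFDerivAt (by simp)).eq u v]

end Nested

/-! ### The cubic polynomial part -/

section Poly

variable {n : ℕ} (η : Matrix (Fin n) (Fin n) ℝ)

def Spoly (z : Fin (n+2) → ℝ) : ℝ := ∑ a, ∑ b, η a b * z (emb n a) * z (emb n b)
def Qpoly (z : Fin (n+2) → ℝ) : ℝ :=
  1/2*(Spoly η z * z 0 + z 0 * z 0 * z (Fin.last (n+1)))
def Sp (x y : Fin (n+2) → ℝ) : ℝ :=
  ∑ a, ∑ b, η a b * (y (emb n a) * x (emb n b) + x (emb n a) * y (emb n b))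
def Q1 (w z : Fin (n+2) → ℝ) : ℝ :=
  1/2*(Sp η z w * z 0 + Spoly η z * w 0 + (2 * w 0) * (z 0 * z (Fin.last (n+1)))
    + w (Fin.last (n+1)) * (z 0 * z 0))
def Q2 (v w z : Fin (n+2) → ℝ) : ℝ :=
  1/2*(Sp η v w * z 0 + Sp η z w * v 0 + Sp η z v * w 0
    + (2 * w 0) * (v 0 * z (Fin.last (n+1)) + z 0 * v (Fin.last (n+1)))
    + w (Fin.last (n+1)) * (v 0 * z 0 + z 0 * v 0))
def Q3 (u v w : Fin (n+2) → ℝ) : ℝ :=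
  1/2*(Sp η v w * u 0 + Sp η u w * v 0 + Sp η u v * w 0
    + (2 * w 0) * (v 0 * u (Fin.last (n+1)) + u 0 * v (Fin.last (n+1)))
    + w (Fin.last (n+1)) * (v 0 * u 0 + u 0 * v 0))

variable {η}

private lemma hp (z : Fin (n+2) → ℝ) (i : Fin (n+2)) :
    HasFDerivAt (fun t : Fin (n+2) → ℝ => t i)
    (ContinuousLinearMap.proj (R := ℝ) (φ := fun _ : Fin (n+2) => ℝ) i) z :=
  (ContinuousLinearMap.proj (R := ℝ) (φ := fun _ : Fin (n+2) => ℝ) i).hasFDerivAt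

lemma sum2_congr (f g : Fin n → Fin n → ℝ) (h : ∀ a b, f a b = g a b) :
    ∑ a, ∑ b, f a b = ∑ a, ∑ b, g a b :=
  Finset.sum_congr rfl fun a _ => Finset.sum_congr rfl fun b _ => h a b

lemma fderiv_Q_apply (z v : Fin (n+2) → ℝ) : fderiv ℝ (Qpoly η) z v = Q1 η v z := by
  have hS := HasFDerivAt.fun_sum (fun a (_ : a ∈ (Finset.univ : Finset (Fin n))) =>
      HasFDerivAt.fun_sum (fun b (_ : b ∈ (Finset.univ : Finset (Fin n))) =>
      ((hp z (emb n a)).const_mul (η a b)).mul (hp z (emb n b))))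
  have hQ := ((hS.mul (hp z 0)).add
      (((hp z 0).mul (hp z 0)).mul (hp z (Fin.last (n+1))))).const_mul (1/2:ℝ)
  rw [show fderiv ℝ (Qpoly η) z = _ from hQ.fderiv]
  simp only [ContinuousLinearMap.smul_apply, ContinuousLinearMap.add_apply,
    ContinuousLinearMap.sum_apply, ContinuousLinearMap.proj_apply, smul_eq_mul,
    Q1, Sp, Spoly, Pi.mul_apply, Pi.add_apply]
  rw [show (∑ a, ∑ b, ((η a b * z (emb n a)) * v (emb n b) + z (emb n b) * (η a b * v (emb n a))))
      = ∑ a, ∑ b, η a b * (v (emb n a) * z (emb n b) + z (emb n a) * v (emb n b)) from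
    Finset.sum_congr rfl fun a _ => Finset.sum_congr rfl fun b _ => by ring]
  ring

lemma fderiv_Q1_apply (w z v : Fin (n+2) → ℝ) :
    fderiv ℝ (Q1 η w) z v = Q2 η v w z := by
  have hSp := HasFDerivAt.fun_sum (fun a (_ : a ∈ (Finset.univ : Finset (Fin n))) =>
      HasFDerivAt.fun_sum (fun b (_ : b ∈ (Finset.univ : Finset (Fin n))) =>
      (((hp z (emb n b)).const_mul (w (emb n a))).add
        ((hp z (emb n a)).mul_const (w (emb n b)))).const_mul (η a b)))
  have hS := HasFDerivAt.fun_sum (fun a (_ : a ∈ (Finset.univ : Finset (Fin n))) =>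
      HasFDerivAt.fun_sum (fun b (_ : b ∈ (Finset.univ : Finset (Fin n))) =>
      ((hp z (emb n a)).const_mul (η a b)).mul (hp z (emb n b))))
  have hQ1 := ((((hSp.mul (hp z 0)).add (hS.mul_const (w 0))).add
      (((hp z 0).mul (hp z (Fin.last (n+1)))).const_mul (2 * w 0))).add
      (((hp z 0).mul (hp z 0)).const_mul (w (Fin.last (n+1))))).const_mul (1/2:ℝ)
  rw [show fderiv ℝ (Q1 η w) z = _ from hQ1.fderiv]
  simp only [ContinuousLinearMap.smul_apply, ContinuousLinearMap.add_apply,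
    ContinuousLinearMap.sum_apply, ContinuousLinearMap.proj_apply, smul_eq_mul,
    Q2, Sp, Spoly, Pi.mul_apply, Pi.add_apply]
  rw [show (∑ a, ∑ b, ((η a b * z (emb n a)) * v (emb n b) + z (emb n b) * (η a b * v (emb n a))))
      = ∑ a, ∑ b, η a b * (v (emb n a) * z (emb n b) + z (emb n a) * v (emb n b)) from
    Finset.sum_congr rfl fun a _ => Finset.sum_congr rfl fun b _ => by ring]
  rw [show (∑ x, ∑ y, η x y * (w (emb n x) * v (emb n y) + w (emb n y) * v (emb n x)))
      = ∑ a, ∑ b, η a b * (w (emb n a) * v (emb n b) + v (emb n a) * w (emb n b)) from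
    sum2_congr _ _ (fun a b => by ring)]
  ring

lemma fderiv_Q2_apply (v w z u : Fin (n+2) → ℝ) :
    fderiv ℝ (Q2 η v w) z u = Q3 η u v w := by
  have hSpw := HasFDerivAt.fun_sum (fun a (_ : a ∈ (Finset.univ : Finset (Fin n))) =>
      HasFDerivAt.fun_sum (fun b (_ : b ∈ (Finset.univ : Finset (Fin n))) =>
      (((hp z (emb n b)).const_mul (w (emb n a))).add
        ((hp z (emb n a)).mul_const (w (emb n b)))).const_mul (η a b)))
  have hSpv := HasFDerivAt.fun_sum (fun a (_ : a ∈ (Finset.univ : Finset (Fin n))) =>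
      HasFDerivAt.fun_sum (fun b (_ : b ∈ (Finset.univ : Finset (Fin n))) =>
      (((hp z (emb n b)).const_mul (v (emb n a))).add
        ((hp z (emb n a)).mul_const (v (emb n b)))).const_mul (η a b)))
  have hQ2 := (((((hp z 0).const_mul (Sp η v w)).add (hSpw.mul_const (v 0))).add
      (hSpv.mul_const (w 0))).add
      ((((hp z (Fin.last (n+1))).const_mul (v 0)).add
        ((hp z 0).mul_const (v (Fin.last (n+1))))).const_mul (2 * w 0)) |>.add
      ((((hp z 0).const_mul (v 0)).add
        ((hp z 0).mul_const (v 0))).const_mul (w (Fin.last (n+1))))).const_mul (1/2:ℝ)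
  rw [show fderiv ℝ (Q2 η v w) z = _ from hQ2.fderiv]
  simp only [ContinuousLinearMap.smul_apply, ContinuousLinearMap.add_apply,
    ContinuousLinearMap.sum_apply, ContinuousLinearMap.proj_apply, smul_eq_mul,
    Q3, Sp]
  rw [show (∑ x, ∑ y, η x y * (w (emb n x) * u (emb n y) + w (emb n y) * u (emb n x)))
      = ∑ a, ∑ b, η a b * (w (emb n a) * u (emb n b) + u (emb n a) * w (emb n b)) from
    sum2_congr _ _ (fun a b => by ring)]
  rw [show (∑ x, ∑ y, η x y * (v (emb n x) * u (emb n y) + v (emb n y) * u (emb n x)))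
      = ∑ a, ∑ b, η a b * (v (emb n a) * u (emb n b) + u (emb n a) * v (emb n b)) from
    sum2_congr _ _ (fun a b => by ring)]
  ring

lemma diff_Q (z : Fin (n+2) → ℝ) : DifferentiableAt ℝ (Qpoly η) z := by
  have hS := HasFDerivAt.fun_sum (fun a (_ : a ∈ (Finset.univ : Finset (Fin n))) =>
      HasFDerivAt.fun_sum (fun b (_ : b ∈ (Finset.univ : Finset (Fin n))) =>
      ((hp z (emb n a)).const_mul (η a b)).mul (hp z (emb n b))))
  exact (((hS.mul (hp z 0)).add
      (((hp z 0).mul (hp z 0)).mul (hp z (Fin.last (n+1))))).const_mul (1/2:ℝ)).differentiableAt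

lemma diff_Q1 (w z : Fin (n+2) → ℝ) : DifferentiableAt ℝ (Q1 η w) z := by
  have hSp := HasFDerivAt.fun_sum (fun a (_ : a ∈ (Finset.univ : Finset (Fin n))) =>
      HasFDerivAt.fun_sum (fun b (_ : b ∈ (Finset.univ : Finset (Fin n))) =>
      (((hp z (emb n b)).const_mul (w (emb n a))).add
        ((hp z (emb n a)).mul_const (w (emb n b)))).const_mul (η a b)))
  have hS := HasFDerivAt.fun_sum (fun a (_ : a ∈ (Finset.univ : Finset (Fin n))) =>
      HasFDerivAt.fun_sum (fun b (_ : b ∈ (Finset.univ : Finset (Fin n))) =>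
      ((hp z (emb n a)).const_mul (η a b)).mul (hp z (emb n b))))
  exact (((((hSp.mul (hp z 0)).add (hS.mul_const (w 0))).add
      (((hp z 0).mul (hp z (Fin.last (n+1)))).const_mul (2 * w 0))).add
      (((hp z 0).mul (hp z 0)).const_mul (w (Fin.last (n+1))))).const_mul (1/2:ℝ)).differentiableAt

lemma diff_Q2 (v w z : Fin (n+2) → ℝ) : DifferentiableAt ℝ (Q2 η v w) z := by
  have hSpw := HasFDerivAt.fun_sum (fun a (_ : a ∈ (Finset.univ : Finset (Fin n))) =>
      HasFDerivAt.fun_sum (fun b (_ : b ∈ (Finset.univ : Finset (Fin n))) =>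
      (((hp z (emb n b)).const_mul (w (emb n a))).add
        ((hp z (emb n a)).mul_const (w (emb n b)))).const_mul (η a b)))
  have hSpv := HasFDerivAt.fun_sum (fun a (_ : a ∈ (Finset.univ : Finset (Fin n))) =>
      HasFDerivAt.fun_sum (fun b (_ : b ∈ (Finset.univ : Finset (Fin n))) =>
      (((hp z (emb n b)).const_mul (v (emb n a))).add
        ((hp z (emb n a)).mul_const (v (emb n b)))).const_mul (η a b)))
  exact ((((((hp z 0).const_mul (Sp η v w)).add (hSpw.mul_const (v 0))).add
      (hSpv.mul_const (w 0))).add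
      ((((hp z (Fin.last (n+1))).const_mul (v 0)).add
        ((hp z 0).mul_const (v (Fin.last (n+1))))).const_mul (2 * w 0)) |>.add
      ((((hp z 0).const_mul (v 0)).add
        ((hp z 0).mul_const (v 0))).const_mul (w (Fin.last (n+1))))).const_mul (1/2:ℝ)).differentiableAt

lemma contDiff_Qpoly : ContDiff ℝ (⊤ : ℕ∞) (Qpoly η) := by
  unfold Qpoly Spoly
  have hq : ∀ i : Fin (n+2), ContDiff ℝ (⊤ : ℕ∞) (fun z : Fin (n+2) → ℝ => z i) := fun i =>
    (ContinuousLinearMap.proj (R := ℝ) (φ := fun _ : Fin (n+2) => ℝ) i).contDiff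
  exact contDiff_const.mul
    (((ContDiff.sum fun a _ => ContDiff.sum fun b _ =>
        ((contDiff_const.mul (hq (emb n a))).mul (hq (emb n b)))).mul (hq 0)).add
      (((hq 0).mul (hq 0)).mul (hq (Fin.last (n+1)))))

lemma Sp_sb_mm (p q : Fin n) :
    Sp η (stdBasis (n+2) (emb n p)) (stdBasis (n+2) (emb n q)) = η q p + η p q := by
  simp [Sp, stdBasis, Pi.single_apply, (emb_inj n).eq_iff, mul_add, Finset.sum_add_distrib,
    ite_and, Finset.sum_ite_eq, mul_ite]
lemma Sp_sb_0r (x : Fin (n+2) → ℝ) : Sp η x (stdBasis (n+2) 0) = 0 := by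
  simp [Sp, stdBasis, Pi.single_apply, emb_ne_zero]
lemma Sp_sb_Lr (x : Fin (n+2) → ℝ) : Sp η x (stdBasis (n+2) (Fin.last (n+1))) = 0 := by
  simp [Sp, stdBasis, Pi.single_apply, emb_ne_last]
lemma Sp_sb_0l (y : Fin (n+2) → ℝ) : Sp η (stdBasis (n+2) 0) y = 0 := by
  simp [Sp, stdBasis, Pi.single_apply, emb_ne_zero]
lemma Sp_sb_Ll (y : Fin (n+2) → ℝ) : Sp η (stdBasis (n+2) (Fin.last (n+1))) y = 0 := by
  simp [Sp, stdBasis, Pi.single_apply, emb_ne_last]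

end Poly

/-! ### The projection and the master derivative computation -/

def pic (n : ℕ) : ((Fin (n+2) → ℝ) →L[ℝ] (Fin n → ℝ)) :=
  ContinuousLinearMap.pi (fun a => ContinuousLinearMap.proj (emb n a))

section Master

variable {n : ℕ} {η : Matrix (Fin n) (Fin n) ℝ} {U : Set (Fin n → ℝ)} {F : (Fin n → ℝ) → ℝ}

lemma pic_apply (t : Fin (n+2) → ℝ) : pic n t = fun a => t (emb n a) := rfl

lemma pic_sb0 : pic n (stdBasis (n+2) 0) = 0 := by
  funext a
  simp [pic_apply, stdBasis, Pi.single_apply, emb_ne_zero]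

lemma pic_sbL : pic n (stdBasis (n+2) (Fin.last (n+1))) = 0 := by
  funext a
  simp [pic_apply, stdBasis, Pi.single_apply, emb_ne_last]

lemma pic_sbm (c : Fin n) : pic n (stdBasis (n+2) (emb n c)) = stdBasis n c := by
  funext a
  simp [pic_apply, stdBasis, Pi.single_apply, (emb_inj n).eq_iff]

lemma fderiv_comp_pic {g : (Fin n → ℝ) → ℝ} {z : Fin (n+2) → ℝ}
    (hg : DifferentiableAt ℝ g (pic n z)) (x : Fin (n+2) → ℝ) :
    fderiv ℝ (fun z => g (pic n z)) z x = fderiv ℝ g (pic n z) (pic n x) := by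
  rw [show (fun z => g (pic n z)) = g ∘ (pic n) from rfl,
    fderiv_comp z hg (pic n).differentiableAt, (pic n).fderiv]
  rfl

lemma Ftilde_split : Ftilde n η F = fun z => Qpoly η z + F (pic n z) :=
  funext fun z => by simp only [Ftilde, Qpoly, Spoly, pic]; ring_nf; rfl

lemma N3_Ftilde (hU : IsOpen U) (hF : ContDiffOn ℝ (⊤ : ℕ∞) F U) {t : Fin (n+2) → ℝ}
    (ht : t ∈ Utilde n U) (u v w : Fin (n+2) → ℝ) :
    N3 (Ftilde n η F) t u v w
      = Q3 η u v w + N3 F (pic n t) (pic n u) (pic n v) (pic n w) := by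
  have hUt : IsOpen (Utilde n U) := hU.preimage (pic n).continuous
  set g1 : (Fin n → ℝ) → ℝ := fun y => fderiv ℝ F y (pic n w) with hg1
  set g2 : (Fin n → ℝ) → ℝ := fun x => fderiv ℝ g1 x (pic n v) with hg2
  have step1 : ∀ z ∈ Utilde n U,
      fderiv ℝ (Ftilde n η F) z w = Q1 η w z + g1 (pic n z) := by
    intro z hz
    have hzU : pic n z ∈ U := hz
    have hFd : DifferentiableAt ℝ (fun z => F (pic n z)) z :=
      (((hF.contDiffAt (hU.mem_nhds hzU)).comp z
        (pic n).contDiff.contDiffAt).differentiableAt (by simp))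
    rw [Ftilde_split, fderiv_fun_add (diff_Q z) hFd, ContinuousLinearMap.add_apply,
      fderiv_Q_apply, fderiv_comp_pic
        (((hF.contDiffAt (hU.mem_nhds hzU)).differentiableAt (by simp))) w]
  have step2 : ∀ y ∈ Utilde n U,
      fderiv ℝ (fun z => fderiv ℝ (Ftilde n η F) z w) y v = Q2 η v w y + g2 (pic n y) := by
    intro y hy
    have hyU : pic n y ∈ U := hy
    have heq : (fun z => fderiv ℝ (Ftilde n η F) z w)
        =ᶠ[nhds y] (fun z => Q1 η w z + g1 (pic n z)) :=
      Filter.eventuallyEq_of_mem (hUt.mem_nhds hy) (fun z hz => step1 z hz)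
    have hg1c : ContDiffAt ℝ 2 g1 (pic n y) :=
      ((hF.contDiffAt (hU.mem_nhds hyU)).fderiv_right (m := 2) (WithTop.coe_le_coe.2 le_top)).clm_apply
        contDiffAt_const
    have hdg : DifferentiableAt ℝ (fun z => g1 (pic n z)) y :=
      (hg1c.comp y (pic n).contDiff.contDiffAt).differentiableAt (by norm_num)
    rw [heq.fderiv_eq, fderiv_fun_add (diff_Q1 w y) hdg, ContinuousLinearMap.add_apply,
      fderiv_Q1_apply,
      fderiv_comp_pic (hg1c.differentiableAt (by norm_num)) v]
  have heq2 : (fun y => fderiv ℝ (fun z => fderiv ℝ (Ftilde n η F) z w) y v)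
      =ᶠ[nhds t] (fun y => Q2 η v w y + g2 (pic n y)) :=
    Filter.eventuallyEq_of_mem (hUt.mem_nhds ht) (fun y hy => step2 y hy)
  have htU : pic n t ∈ U := ht
  have hg1c : ContDiffAt ℝ 2 g1 (pic n t) :=
    ((hF.contDiffAt (hU.mem_nhds htU)).fderiv_right (m := 2) (WithTop.coe_le_coe.2 le_top)).clm_apply
      contDiffAt_const
  have hg2c : ContDiffAt ℝ 1 g2 (pic n t) :=
    (hg1c.fderiv_right (m := 1) (by norm_num)).clm_apply contDiffAt_const
  have hdg2 : DifferentiableAt ℝ (fun z => g2 (pic n z)) t :=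
    (hg2c.comp t (pic n).contDiff.contDiffAt).differentiableAt (by norm_num)
  show fderiv ℝ (fun y => fderiv ℝ (fun z => fderiv ℝ (Ftilde n η F) z w) y v) t u = _
  rw [heq2.fderiv_eq, fderiv_fun_add (diff_Q2 v w t) hdg2, ContinuousLinearMap.add_apply,
    fderiv_Q2_apply, fderiv_comp_pic (hg2c.differentiableAt one_ne_zero) u]
  rfl

lemma contDiffOn_Ftilde (hU : IsOpen U) (hF : ContDiffOn ℝ (⊤ : ℕ∞) F U) :
    ContDiffOn ℝ (⊤ : ℕ∞) (Ftilde n η F) (Utilde n U) := by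
  rw [Ftilde_split]
  exact (contDiff_Qpoly.contDiffOn).add
    (hF.comp ((pic n).contDiff.contDiffOn) (fun z hz => hz))

lemma thirdDeriv_Ftilde_eq (hU : IsOpen U) (hF : ContDiffOn ℝ (⊤ : ℕ∞) F U)
    {t : Fin (n+2) → ℝ} (ht : t ∈ Utilde n U) (i j k : Fin (n+2)) :
    thirdDeriv (n+2) (Ftilde n η F) (Utilde n U) t i j k
      = Q3 η (stdBasis (n+2) i) (stdBasis (n+2) j) (stdBasis (n+2) k)
        + N3 F (pic n t) (pic n (stdBasis (n+2) i)) (pic n (stdBasis (n+2) j))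
            (pic n (stdBasis (n+2) k)) := by
  have hUt : IsOpen (Utilde n U) := hU.preimage (pic n).continuous
  rw [thirdDeriv, D3_eq hUt (contDiffOn_Ftilde hU hF) ht, N3_Ftilde hU hF ht]

end Master

set_option maxHeartbeats 2000000 in
/-- if the smooth function `F` satisfies the associativity equations on the
open set `U` with the symmetric invertible metric `η`, then `F̃` satisfies the associativity
equations on `ℝ × U × ℝ` with the metric `η̃`. -/
theorem stmt1 (n : ℕ) (U : Set (Fin n → ℝ)) (hU : IsOpen U)
    (F : (Fin n → ℝ) → ℝ) (hF : ContDiffOn ℝ (⊤ : ℕ∞) F U)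
    (η : Matrix (Fin n) (Fin n) ℝ)
    (hsymm : ∀ i j, η i j = η j i) (hdet : IsUnit η.det)
    (hassoc : AssocEqns n F U η⁻¹) :
    AssocEqns (n + 2) (Ftilde n η F) (Utilde n U) (etilde n η)⁻¹ := by
  intro t ht α β γ δ
  have hUt : IsOpen (Utilde n U) := hU.preimage (pic n).continuous
  have htU : pic n t ∈ U := ht
  have hC := thirdDeriv_Ftilde_eq (η := η) hU hF ht
  have hN3d : ∀ p q r : Fin n, N3 F (pic n t) (stdBasis n p) (stdBasis n q) (stdBasis n r)
      = thirdDeriv n F U (pic n t) p q r := fun p q r => (D3_eq hU hF htU _ _ _).symm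
  have hd12 : ∀ p q r, thirdDeriv n F U (pic n t) p q r
      = thirdDeriv n F U (pic n t) q p r := fun p q r => by
    rw [thirdDeriv, thirdDeriv, D3_eq hU hF htU, D3_eq hU hF htU]
    exact N3_symm12 hU hF htU _ _ _
  have hd23 : ∀ p q r, thirdDeriv n F U (pic n t) p q r
      = thirdDeriv n F U (pic n t) p r q := fun p q r => by
    rw [thirdDeriv, thirdDeriv, D3_eq hU hF htU, D3_eq hU hF htU]
    exact N3_symm23 hU hF htU _ _ _
  have hmul1 : ∀ q b : Fin n, ∑ a, η q a * η⁻¹ a b = if q = b then 1 else 0 := by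
    intro q b
    have : ∑ a, η q a * η⁻¹ a b = (η * η⁻¹) q b := (Matrix.mul_apply).symm
    rw [this, Matrix.mul_nonsing_inv _ hdet, Matrix.one_apply]
  have hmul2 : ∀ a r : Fin n, ∑ b, η⁻¹ a b * η r b = if a = r then 1 else 0 := by
    intro a r
    have h1 : ∑ b, η⁻¹ a b * η r b = ∑ b, η⁻¹ a b * η b r :=
      Finset.sum_congr rfl fun b _ => by rw [hsymm r b]
    have h2 : ∑ b, η⁻¹ a b * η b r = (η⁻¹ * η) a r := (Matrix.mul_apply).symm
    rw [h1, h2, Matrix.nonsing_inv_mul _ hdet, Matrix.one_apply]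
  have hA : ∀ (q : Fin n) (v : Fin n → ℝ), ∑ a, ∑ b, η q a * η⁻¹ a b * v b = v q := by
    intro q v
    rw [Finset.sum_comm]
    have h : ∀ b, ∑ a, η q a * η⁻¹ a b * v b = (if q = b then 1 else 0) * v b := fun b => by
      rw [← Finset.sum_mul, hmul1]
    simp [h, ite_mul, Finset.sum_ite_eq]
  have hB : ∀ (r : Fin n) (v : Fin n → ℝ), ∑ a, ∑ b, v a * η⁻¹ a b * η r b = v r := by
    intro r v
    have h : ∀ a, ∑ b, v a * η⁻¹ a b * η r b = v a * (if a = r then 1 else 0) := fun a => by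
      rw [show (∑ b, v a * η⁻¹ a b * η r b) = v a * ∑ b, η⁻¹ a b * η r b by
        rw [Finset.mul_sum]; exact Finset.sum_congr rfl fun b _ => by ring, hmul2]
    simp [h, mul_ite, Finset.sum_ite_eq']
  rw [etilde_inv hdet]
  simp only [sum_split n]
  simp only [et_00, et_0m, et_0L, et_m0, et_mm, et_mL, et_L0, et_Lm, et_LL]
  simp only [mul_zero, zero_mul, mul_one, one_mul, Finset.sum_const_zero, add_zero, zero_add]
  have hA2 : ∀ (q : Fin n) (v : Fin n → ℝ),
      ∑ x, ∑ y, 2⁻¹ * (η x q + η q x) * η⁻¹ x y * v y = v q := by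
    intro q v
    rw [sum2_congr _ (fun a b => η q a * η⁻¹ a b * v b)
      (fun a b => by rw [hsymm a q]; ring)]
    exact hA q v
  have hB2 : ∀ (s : Fin n) (v : Fin n → ℝ),
      ∑ x, ∑ y, v x * η⁻¹ x y * (2⁻¹ * (η y s + η s y)) = v s := by
    intro s v
    rw [sum2_congr _ (fun a b => v a * η⁻¹ a b * η s b)
      (fun a b => by rw [hsymm b s]; ring)]
    exact hB s v
  have hd13 : ∀ p q r, thirdDeriv n F U (pic n t) p q r
      = thirdDeriv n F U (pic n t) r q p := fun p q r => by
    rw [hd12, hd23, hd12]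
  rcases tri n α with rfl | ⟨p, rfl⟩ | rfl <;>
  rcases tri n β with rfl | ⟨q, rfl⟩ | rfl <;>
  rcases tri n γ with rfl | ⟨r, rfl⟩ | rfl <;>
  rcases tri n δ with rfl | ⟨s, rfl⟩ | rfl <;>
  simp only [hC, pic_sb0, pic_sbL, pic_sbm, N3_zero₁, N3_zero₂, N3_zero₃, hN3d, Q3,
      Sp_sb_mm, Sp_sb_0r, Sp_sb_0l, Sp_sb_Lr, Sp_sb_Ll] <;>
  (simp [stdBasis, Pi.single_apply, emb_ne_zero, emb_ne_last, zero_ne_emb, last_ne_emb,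
      zero_ne_last n, last_ne_zero', hA2, hB2]
   try ring
   try exact hassoc _ htU _ _ _ _
   try exact hd23 _ _ _
   try exact hd13 _ _ _
   try exact (hd23 _ _ _).symm
   try exact (hd13 _ _ _).symm)

end
end

section
/- Let r ≠ 0, let Φ : ℝⁿ → ℝⁿ be a smooth diffeomorphism onto an open set V ⊆ ℝⁿ satisfying Φ(u + μ·(1,…,1)) = e^{−rμ} Φ(u) for all u and μ, and let H₁,…,Hₙ : ℝⁿ → ℝ be smooth functions satisfying H_i(u + μ·(1,…,1)) = e^{−rμ} H_i(u) for all u, μ and i. Write u(x) = Φ⁻¹(x) and define on V the correlators c_{αβγ}(x) = ∑_{i=1}^n H_i(u(x))² · (∂u^i/∂x^α)(x) · (∂u^i/∂x^β)(x) · (∂u^i/∂x^γ)(x). Then the correlators are homogeneous of degree −1: for every μ ∈ ℝ with λ = e^{−rμ}, and every x ∈ V with λx ∈ V, c_{αβγ}(λx) = λ⁻¹ c_{αβγ}(x) for all α,β,γ ∈ {1,…,n}. -/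
open scoped BigOperators

/-- if `Φ : ℝⁿ → ℝⁿ` is a smooth diffeomorphism onto an open set `V`
(with smooth inverse `Ψ = Φ⁻¹`) satisfying `Φ(u + μ·(1,…,1)) = e^{−rμ} Φ(u)`, and the
smooth Lamé coefficients satisfy `H_i(u + μ·(1,…,1)) = e^{−rμ} H_i(u)`, then the
correlators
`c_{αβγ}(x) = ∑ᵢ H_i(u(x))² (∂u^i/∂x^α)(x) (∂u^i/∂x^β)(x) (∂u^i/∂x^γ)(x)`
are homogeneous of degree `−1`: `c_{αβγ}(λx) = λ⁻¹ c_{αβγ}(x)` for `λ = e^{−rμ}`. -/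
theorem stmt6 (n : ℕ) (r : ℝ) (hr : r ≠ 0)
    (Φ Ψ : (Fin n → ℝ) → (Fin n → ℝ))
    (hΦ : ContDiff ℝ (⊤ : ℕ∞) Φ)
    (V : Set (Fin n → ℝ)) (hV : IsOpen V) (hrange : Set.range Φ = V)
    (hΨ : ContDiffOn ℝ (⊤ : ℕ∞) Ψ V)
    (hleft : ∀ u : Fin n → ℝ, Ψ (Φ u) = u)
    (hright : ∀ x ∈ V, Φ (Ψ x) = x)
    (htrans : ∀ (u : Fin n → ℝ) (μ : ℝ),
      Φ (fun i => u i + μ) = Real.exp (-r * μ) • Φ u)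
    (H : Fin n → (Fin n → ℝ) → ℝ)
    (hH : ∀ i, ContDiff ℝ (⊤ : ℕ∞) (H i))
    (hHtrans : ∀ (i : Fin n) (u : Fin n → ℝ) (μ : ℝ),
      H i (fun k => u k + μ) = Real.exp (-r * μ) * H i u)
    (c : Fin n → Fin n → Fin n → (Fin n → ℝ) → ℝ)
    (hc : ∀ (α β γ : Fin n) (x : Fin n → ℝ),
      c α β γ x = ∑ i, (H i (Ψ x)) ^ 2
        * fderivWithin ℝ Ψ V x (Pi.single α 1) i
        * fderivWithin ℝ Ψ V x (Pi.single β 1) i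
        * fderivWithin ℝ Ψ V x (Pi.single γ 1) i) :
    ∀ (μ l : ℝ), l = Real.exp (-r * μ) →
      ∀ x ∈ V, l • x ∈ V →
        ∀ α β γ : Fin n, c α β γ (l • x) = l⁻¹ * c α β γ x := by
  intro μ l hl x hx hlx α β γ
  have hl0 : l ≠ 0 := by rw [hl]; exact (Real.exp_pos _).ne'
  -- Ψ equivariance on V
  have hΨeq : ∀ y ∈ V, Ψ (l • y) = fun k => Ψ y k + μ := by
    intro y hy
    have h1 : Φ (fun k => Ψ y k + μ) = l • y := by
      rw [htrans (Ψ y) μ, hright y hy, ← hl]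
    rw [← h1, hleft]
  -- differentiability
  have hdiff : ∀ y ∈ V, DifferentiableAt ℝ Ψ y := fun y hy =>
    (hΨ.contDiffAt (hV.mem_nhds hy)).differentiableAt (by simp)
  have hDx : HasFDerivAt Ψ (fderiv ℝ Ψ x) x := (hdiff x hx).hasFDerivAt
  have hDlx : HasFDerivAt Ψ (fderiv ℝ Ψ (l • x)) (l • x) := (hdiff _ hlx).hasFDerivAt
  have hsmul : HasFDerivAt (fun y : Fin n → ℝ => l • y)
      (l • ContinuousLinearMap.id ℝ (Fin n → ℝ)) x := (hasFDerivAt_id x).const_smul l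
  have hev : (fun y => Ψ (l • y)) =ᶠ[nhds x] (fun y => Ψ y + fun _ => μ) := by
    filter_upwards [hV.mem_nhds hx] with y hy
    rw [hΨeq y hy]; rfl
  have h2 : HasFDerivAt (fun y => Ψ (l • y)) (fderiv ℝ Ψ x) x :=
    (hDx.add_const _).congr_of_eventuallyEq hev
  have h3 : HasFDerivAt (fun y => Ψ (l • y))
      ((fderiv ℝ Ψ (l • x)).comp (l • ContinuousLinearMap.id ℝ (Fin n → ℝ))) x :=
    hDlx.comp x hsmul
  have huniq := h2.unique h3
  have key : ∀ v : Fin n → ℝ, fderiv ℝ Ψ (l • x) v = l⁻¹ • fderiv ℝ Ψ x v := by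
    intro v
    have h4 : fderiv ℝ Ψ x (l⁻¹ • v) = fderiv ℝ Ψ (l • x) (l • l⁻¹ • v) := by
      rw [huniq]; rfl
    rw [smul_smul, mul_inv_cancel₀ hl0, one_smul] at h4
    rw [← h4, map_smul]
  have hfw : ∀ y ∈ V, fderivWithin ℝ Ψ V y = fderiv ℝ Ψ y := fun y hy =>
    fderivWithin_of_isOpen hV hy
  have hHval : ∀ i, H i (Ψ (l • x)) = l * H i (Ψ x) := by
    intro i
    rw [hΨeq x hx, hHtrans i (Ψ x) μ, hl]
  rw [hc, hc, Finset.mul_sum]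
  refine Finset.sum_congr rfl fun i _ => ?_
  rw [hfw _ hlx, hfw _ hx, hHval i, key, key, key]
  simp only [Pi.smul_apply, smul_eq_mul]
  field_simp
end

section
/- Let F : ℝ² ∖ {(0,0)} → ℝ be defined by F(x¹,x²) = −(1/8)((x¹)² + (x²)²)·log((x¹)² + (x²)²). Then F satisfies the associativity equations with the identity metric η_{αβ} = δ_{αβ}: for all (x¹,x²) ≠ (0,0) and all α,β,γ,δ ∈ {1,2}, ∑_{λ=1}^2 (∂³F/∂x^α∂x^β∂x^λ)(∂³F/∂x^γ∂x^δ∂x^λ) = ∑_{λ=1}^2 (∂³F/∂x^γ∂x^β∂x^λ)(∂³F/∂x^α∂x^δ∂x^λ). -/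
open scoped BigOperators

noncomputable section

/-- The prepotential `F(x¹,x²) = −(1/8)((x¹)² + (x²)²) log((x¹)² + (x²)²)`. -/
def F9 (x : Fin 2 → ℝ) : ℝ :=
  -(1 / 8) * ((x 0) ^ 2 + (x 1) ^ 2) * Real.log ((x 0) ^ 2 + (x 1) ^ 2)

/-- The standard basis vector `e_i` of `ℝ²`. -/
def e2 (i : Fin 2) : Fin 2 → ℝ := Pi.single i 1

/-- Third partial derivative `∂³F/∂x^a∂x^b∂x^g` at `x`. -/
def d3 (F : (Fin 2 → ℝ) → ℝ) (x : Fin 2 → ℝ) (a b g : Fin 2) : ℝ :=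
  iteratedFDeriv ℝ 3 F x ![e2 a, e2 b, e2 g]

/-!
`F` is radial, `F(x) = φ(|x|²)` with `φ(t) = -(1/8) t log t`, so `φ''(t) = -1/(8t)` and
`φ'''(t) = 1/(8t²)`. Differentiating `φ(|x|²)` three times gives
`D³F(x)[u,v,w] = 8φ'''⟨x,u⟩⟨x,v⟩⟨x,w⟩ + 4φ''(⟨u,v⟩⟨x,w⟩ + ⟨v,w⟩⟨x,u⟩ + ⟨u,w⟩⟨x,v⟩)`, hence
`∂³F/∂x^α∂x^β∂x^γ = (2x_αx_βx_γ - |x|²(δ_αβ x_γ + δ_βγ x_α + δ_αγ x_β)) / (2|x|⁴)`.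
After clearing the common factor the associativity equations become polynomial identities in
`x¹, x²`. They rely on the dimension being two: the part of `∑_λ F_αβλ F_γδλ` antisymmetric in
`α, γ` is also antisymmetric in `β, δ`, hence a multiple of `ε_αγ ε_βδ`, and that multiple has
the factor `|x|² - (x¹)² - (x²)² = 0` (treating `|x|²` as a separate symbol).
-/

open Filter Topology

section ThirdDerivative

variable {E F G : Type*} [NormedAddCommGroup E] [NormedSpace ℝ E] [NormedAddCommGroup F]
  [NormedSpace ℝ F] [NormedAddCommGroup G] [NormedSpace ℝ G]

theorem fderiv_clm_apply_const {c : E → G →L[ℝ] F} {x : E} (hc : DifferentiableAt ℝ c x)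
    (w : G) (u : E) : fderiv ℝ (fun y => c y w) x u = fderiv ℝ c x u w := by
  simp [fderiv_clm_apply hc (differentiableAt_const w)]

theorem iteratedFDeriv_three_apply_eq_fderiv {f : E → F} {x : E} (hf : ContDiffAt ℝ 3 f x)
    (u v w : E) :
    iteratedFDeriv ℝ 3 f x ![u, v, w] =
      fderiv ℝ (fun y => fderiv ℝ (fun z => fderiv ℝ f z w) y v) x u := by
  have hf' : ∀ᶠ y in 𝓝 x, ContDiffAt ℝ 3 f y := hf.eventually (by simp)
  have inner : (fun y => fderiv ℝ (fun z => fderiv ℝ f z w) y v) =ᶠ[𝓝 x]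
      fun y => fderiv ℝ (fderiv ℝ f) y v w := by
    filter_upwards [hf'] with y hy
    exact fderiv_clm_apply_const ((hy.fderiv_right (m := 2) (by norm_num)).differentiableAt
      (by norm_num)) w v
  have h2 : DifferentiableAt ℝ (fderiv ℝ (fderiv ℝ f)) x :=
    ((hf.fderiv_right (m := 2) (by norm_num)).fderiv_right (m := 1) (by norm_num)).differentiableAt
      (by norm_num)
  rw [inner.fderiv_eq, fderiv_clm_apply_const (h2.clm_apply (differentiableAt_const v)),
    fderiv_clm_apply_const h2, iteratedFDeriv_succ_apply_right, iteratedFDeriv_succ_apply_right,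
    iteratedFDeriv_one_apply]
  rfl

end ThirdDerivative

section Radial

variable {ι : Type*} [Fintype ι]

def dotProductCLM (w : ι → ℝ) : (ι → ℝ) →L[ℝ] ℝ :=
  ∑ i, w i • ContinuousLinearMap.proj i

@[simp]
theorem dotProductCLM_apply (w v : ι → ℝ) : dotProductCLM w v = w ⬝ᵥ v := by
  simp [dotProductCLM, dotProduct]

theorem hasFDerivAt_dotProduct_const_right (w y : ι → ℝ) :
    HasFDerivAt (fun z => z ⬝ᵥ w) (dotProductCLM w) y := by
  convert (dotProductCLM w).hasFDerivAt with z
  simp [dotProduct_comm]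

theorem hasFDerivAt_dotProduct_self (y : ι → ℝ) :
    HasFDerivAt (fun z : ι → ℝ => z ⬝ᵥ z) ((2 : ℝ) • dotProductCLM y) y := by
  have h := HasFDerivAt.fun_sum (u := Finset.univ) fun i _ =>
    ((ContinuousLinearMap.proj (R := ℝ) (φ := fun _ : ι => ℝ) i).hasFDerivAt (x := y)).mul
      ((ContinuousLinearMap.proj (R := ℝ) (φ := fun _ : ι => ℝ) i).hasFDerivAt (x := y))
  refine h.congr_fderiv ?_
  ext v
  simp [dotProduct, Finset.sum_add_distrib, Finset.mul_sum, two_mul]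

theorem HasDerivAt.hasFDerivAt_comp_dotProduct_self {h : ℝ → ℝ} {h' : ℝ} {y : ι → ℝ}
    (hh : HasDerivAt h h' (y ⬝ᵥ y)) :
    HasFDerivAt (fun z => h (z ⬝ᵥ z)) (h' • (2 : ℝ) • dotProductCLM y) y :=
  hh.comp_hasFDerivAt (f := fun z => z ⬝ᵥ z) y (hasFDerivAt_dotProduct_self y)

theorem contDiff_dotProduct_self {n : WithTop ℕ∞} : ContDiff ℝ n fun y : ι → ℝ => y ⬝ᵥ y := by
  unfold dotProduct
  fun_prop

theorem iteratedFDeriv_three_comp_dotProduct_self {φ φ₁ φ₂ : ℝ → ℝ} {φ₃ : ℝ} {x : ι → ℝ}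
    (hφ : ContDiffAt ℝ 3 φ (x ⬝ᵥ x))
    (hφ₁ : ∀ᶠ t in 𝓝 (x ⬝ᵥ x), HasDerivAt φ (φ₁ t) t)
    (hφ₂ : ∀ᶠ t in 𝓝 (x ⬝ᵥ x), HasDerivAt φ₁ (φ₂ t) t)
    (hφ₃ : HasDerivAt φ₂ φ₃ (x ⬝ᵥ x)) (u v w : ι → ℝ) :
    iteratedFDeriv ℝ 3 (fun y => φ (y ⬝ᵥ y)) x ![u, v, w] =
      8 * φ₃ * (x ⬝ᵥ u) * (x ⬝ᵥ v) * (x ⬝ᵥ w) +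
        4 * φ₂ (x ⬝ᵥ x) * ((u ⬝ᵥ v) * (x ⬝ᵥ w) + (v ⬝ᵥ w) * (x ⬝ᵥ u) + (u ⬝ᵥ w) * (x ⬝ᵥ v)) := by
  have hr : Tendsto (fun y : ι → ℝ => y ⬝ᵥ y) (𝓝 x) (𝓝 (x ⬝ᵥ x)) :=
    (contDiff_dotProduct_self (n := 0)).continuous.tendsto x
  have first : ∀ᶠ y in 𝓝 x,
      fderiv ℝ (fun z => φ (z ⬝ᵥ z)) y w = φ₁ (y ⬝ᵥ y) * (2 * (y ⬝ᵥ w)) := by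
    filter_upwards [hr.eventually hφ₁] with y hy
    simp only [hy.hasFDerivAt_comp_dotProduct_self.fderiv, smul_apply,
      dotProductCLM_apply, smul_eq_mul]
  have second : ∀ᶠ y in 𝓝 x, fderiv ℝ (fun y => fderiv ℝ (fun z => φ (z ⬝ᵥ z)) y w) y v =
      φ₂ (y ⬝ᵥ y) * (2 * (y ⬝ᵥ v)) * (2 * (y ⬝ᵥ w)) + φ₁ (y ⬝ᵥ y) * (2 * (v ⬝ᵥ w)) := by
    filter_upwards [first.eventually_nhds, hr.eventually hφ₂, hr.eventually hφ₁] with y hy h₂ h₁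
    rw [EventuallyEq.fderiv_eq hy, (h₂.hasFDerivAt_comp_dotProduct_self.fun_mul
      ((hasFDerivAt_dotProduct_const_right w y).const_mul 2)).fderiv]
    simp only [dotProduct_comm, add_apply, smul_apply,
      dotProductCLM_apply, smul_eq_mul]
    ring
  have hf : ContDiffAt ℝ 3 (fun y => φ (y ⬝ᵥ y)) x :=
    hφ.comp (f := fun y => y ⬝ᵥ y) x contDiff_dotProduct_self.contDiffAt
  have h₁ : HasDerivAt φ₁ (φ₂ (x ⬝ᵥ x)) (x ⬝ᵥ x) := hφ₂.self_of_nhds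
  rw [iteratedFDeriv_three_apply_eq_fderiv hf, EventuallyEq.fderiv_eq second,
    ((hφ₃.hasFDerivAt_comp_dotProduct_self.fun_mul
      ((hasFDerivAt_dotProduct_const_right v x).const_mul 2)).fun_mul
      ((hasFDerivAt_dotProduct_const_right w x).const_mul 2)).fun_add
      (h₁.hasFDerivAt_comp_dotProduct_self.mul_const _) |>.fderiv]
  simp only [smul_add, add_apply, smul_apply,
    dotProductCLM_apply, dotProduct_comm, smul_eq_mul]
  ring

end Radial

def d3F9Numerator (x : Fin 2 → ℝ) (a b g : Fin 2) : ℝ :=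
  2 * x a * x b * x g -
    (x ⬝ᵥ x) * ((e2 a ⬝ᵥ e2 b) * x g + (e2 b ⬝ᵥ e2 g) * x a + (e2 a ⬝ᵥ e2 g) * x b)

theorem d3_F9_eq {x : Fin 2 → ℝ} (hx : x ≠ 0) (a b g : Fin 2) :
    d3 F9 x a b g = (2 * (x ⬝ᵥ x) ^ 2)⁻¹ * d3F9Numerator x a b g := by
  have hr : x ⬝ᵥ x ≠ 0 := mt dotProduct_self_eq_zero.1 hx
  have hF : F9 = fun y => -(1 / 8) * ((y ⬝ᵥ y) * Real.log (y ⬝ᵥ y)) := by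
    funext y
    simp only [F9, dotProduct, Fin.sum_univ_two, sq]
    ring
  have h := iteratedFDeriv_three_comp_dotProduct_self (x := x)
    (φ := fun t => -(1 / 8) * (t * Real.log t)) (φ₁ := fun t => -(1 / 8) * (Real.log t + 1))
    (φ₂ := fun t => -(1 / 8) * t⁻¹) (φ₃ := 1 / 8 * ((x ⬝ᵥ x) ^ 2)⁻¹) ?_ ?_ ?_ ?_
    (e2 a) (e2 b) (e2 g)
  · rw [d3, hF, h]
    simp only [d3F9Numerator, e2, dotProduct_single, mul_one]
    field_simp
    ring
  · exact contDiffAt_const.mul (contDiffAt_id.mul (Real.contDiffAt_log.2 hr))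
  · filter_upwards [eventually_ne_nhds hr] with t ht
    exact (Real.hasDerivAt_mul_log ht).const_mul _
  · filter_upwards [eventually_ne_nhds hr] with t ht
    simpa using ((Real.hasDerivAt_log ht).add_const 1).const_mul (-(1 / 8) : ℝ)
  · exact ((hasDerivAt_inv hr).const_mul _).congr_deriv (by ring)

theorem sum_d3F9Numerator_mul_swap (x : Fin 2 → ℝ) (a b g d : Fin 2) :
    ∑ l, d3F9Numerator x a b l * d3F9Numerator x g d l =
      ∑ l, d3F9Numerator x g b l * d3F9Numerator x a d l := by
  fin_cases a <;> fin_cases b <;> fin_cases g <;> fin_cases d <;>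
    simp only [d3F9Numerator, e2, dotProduct, Fin.sum_univ_two, Fin.zero_eta,
      Fin.mk_one, Pi.single_eq_same, Pi.single_eq_of_ne, ne_eq, zero_ne_one, one_ne_zero,
      not_false_eq_true] <;>
    ring

/-- `F(x¹,x²) = −(1/8)((x¹)² + (x²)²) log((x¹)² + (x²)²)` satisfies the
associativity equations with the identity metric `η_{αβ} = δ_{αβ}` on `ℝ² ∖ {0}`. -/
theorem stmt9 :
    ∀ x : Fin 2 → ℝ, x ≠ 0 →
      ∀ α β γ δ : Fin 2,
        ∑ l, d3 F9 x α β l * d3 F9 x γ δ l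
          = ∑ l, d3 F9 x γ β l * d3 F9 x α δ l := by
  intro x hx α β γ δ
  simp only [d3_F9_eq hx, mul_mul_mul_comm _ (d3F9Numerator x _ _ _), ← Finset.mul_sum,
    sum_d3F9Numerator_mul_swap x α β γ δ]

end
end
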